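/- Let (v_k) be a sequence in ℝ³ with Euclidean norm ‖v_k‖ = 1 converging to v, let t_k → +∞ be real numbers such that t_k·q(v_k) converges to some a ∈ ℝ. Let x ∈ ℝ³ satisfy q(x) = 0 and b(x,v) > 0, and let x_k → x in ℝ³. For u ∈ [0,1] set D_k(u) = 1 + t_k·u·b(x_k, v_k) + (t_k²·u²/4)·q(v_k)·q(x_k) and x_k(u) = D_k(u)⁻¹·(u·x_k + (t_k·u²·q(x_k)/2)·v_k). Then there exists K such that for all k ≥ K one has D_k(u) > 0 for every u ∈ [0,1], and moreover sup_{u ∈ [0,1]} ‖x_k(u)‖ → 0 as k → ∞. -/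
import Mathlib


open Filter Topology

noncomputable section

/-- The Lorentzian quadratic form `q(x) = 2x₁x₃ + x₂²` on Euclidean `ℝ³`. -/
def qE (x : EuclideanSpace ℝ (Fin 3)) : ℝ := 2 * x 0 * x 2 + (x 1) ^ 2

/-- The polar bilinear form `b(x,v) = x₁v₃ + x₂v₂ + x₃v₁` of `qE`. -/
def bE (x v : EuclideanSpace ℝ (Fin 3)) : ℝ := x 0 * v 2 + x 1 * v 1 + x 2 * v 0

/-- `D_k(u) = 1 + t·u·b(x,v) + (t²u²/4)·q(v)·q(x)`. -/
def Dk (t : ℝ) (x v : EuclideanSpace ℝ (Fin 3)) (u : ℝ) : ℝ :=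
  1 + t * u * bE x v + t ^ 2 * u ^ 2 / 4 * qE v * qE x

/-- `x_k(u) = D_k(u)⁻¹ · (u·x + (t·u²·q(x)/2)·v)`. -/
def Xk (t : ℝ) (x v : EuclideanSpace ℝ (Fin 3)) (u : ℝ) : EuclideanSpace ℝ (Fin 3) :=
  (Dk t x v u)⁻¹ • (u • x + (t * u ^ 2 * qE x / 2) • v)

/-- Coordinate evaluation is continuous along sequences in `EuclideanSpace ℝ (Fin 3)`. -/
lemma tendsto_coord {y : ℕ → EuclideanSpace ℝ (Fin 3)} {z : EuclideanSpace ℝ (Fin 3)}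
    (h : Tendsto y atTop (𝓝 z)) (i : Fin 3) :
    Tendsto (fun k => y k i) atTop (𝓝 (z i)) :=
  ((EuclideanSpace.proj i : EuclideanSpace ℝ (Fin 3) →L[ℝ] ℝ).continuous.tendsto z).comp h

/-- Lower bound on the denominator `Dk`. -/
lemma Dk_lower (t B A Q u qv : ℝ) (ht1 : 1 ≤ t) (hB : 0 < B) (hAQ : |A| * |Q| ≤ B)
    (hA : A = t * qv) (hu0 : 0 ≤ u) (hu1 : u ≤ 1) :
    1 + t * u * B / 2 ≤ 1 + t * u * B + t ^ 2 * u ^ 2 / 4 * qv * Q := by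
  have htpos : (0:ℝ) < t := by linarith
  have hAQge : -B ≤ A * Q := by
    have h1 := neg_abs_le (A * Q)
    rw [abs_mul] at h1; linarith
  have hterm : t ^ 2 * u ^ 2 / 4 * qv * Q = u ^ 2 / 4 * t * (A * Q) := by rw [hA]; ring
  have hu2 : u ^ 2 ≤ u := by nlinarith
  have h2 : u ^ 2 / 4 * t * (-B) ≤ u ^ 2 / 4 * t * (A * Q) :=
    mul_le_mul_of_nonneg_left hAQge (by positivity)
  have h3 : u ^ 2 * (t * B) ≤ u * (t * B) := mul_le_mul_of_nonneg_right hu2 (by positivity)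
  have h4 : 0 ≤ t * u * B := by positivity
  rw [hterm]
  linarith

/-- Upper bound on the numerator against the denominator. -/
lemma num_upper (t B Q u nx : ℝ) (ht1 : 1 ≤ t) (hB : 0 < B) (hnx : 0 ≤ nx)
    (hu0 : 0 ≤ u) (hu1 : u ≤ 1) :
    u * nx + t * u ^ 2 * |Q| / 2 ≤
      (2 * nx / B * t⁻¹ + |Q| / B) * (1 + t * u * B / 2) := by
  have htpos : (0:ℝ) < t := by linarith
  have e1 : 2 * nx / B * t⁻¹ * (t * u * B / 2) = u * nx := by
    field_simp
  have e2 : |Q| / B * (t * u * B / 2) = t * u * |Q| / 2 := by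
    field_simp
  have hu2 : u ^ 2 ≤ u := by nlinarith
  have h5 : t * u ^ 2 * |Q| ≤ t * u * |Q| := by
    have := mul_le_mul_of_nonneg_right hu2 (abs_nonneg Q)
    nlinarith [abs_nonneg Q]
  have h6 : 0 ≤ 2 * nx / B * t⁻¹ := by positivity
  have h7 : 0 ≤ |Q| / B := by positivity
  have expand : (2 * nx / B * t⁻¹ + |Q| / B) * (1 + t * u * B / 2) =
      (2 * nx / B * t⁻¹ + |Q| / B) + 2 * nx / B * t⁻¹ * (t * u * B / 2)
        + |Q| / B * (t * u * B / 2) := by ring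
  rw [expand, e1, e2]
  linarith

theorem stmt2 (v : EuclideanSpace ℝ (Fin 3)) (vk : ℕ → EuclideanSpace ℝ (Fin 3))
    (hnorm : ∀ k, ‖vk k‖ = 1)
    (hv : Tendsto vk atTop (𝓝 v))
    (t : ℕ → ℝ) (ht : Tendsto t atTop atTop)
    (a : ℝ) (hta : Tendsto (fun k => t k * qE (vk k)) atTop (𝓝 a))
    (x : EuclideanSpace ℝ (Fin 3)) (hqx : qE x = 0) (hbxv : 0 < bE x v)
    (xk : ℕ → EuclideanSpace ℝ (Fin 3)) (hxk : Tendsto xk atTop (𝓝 x)) :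
    (∃ K : ℕ, ∀ k ≥ K, ∀ u ∈ Set.Icc (0:ℝ) 1, 0 < Dk (t k) (xk k) (vk k) u) ∧
    Tendsto (fun k => ⨆ u : Set.Icc (0:ℝ) 1, ‖Xk (t k) (xk k) (vk k) (u : ℝ)‖)
      atTop (𝓝 0) := by
  -- limits of the scalar quantities
  have hq : Tendsto (fun k => qE (xk k)) atTop (𝓝 (qE x)) := by
    simp only [qE]
    exact (((tendsto_coord hxk 0).const_mul 2).mul (tendsto_coord hxk 2)).add
      ((tendsto_coord hxk 1).pow 2)
  rw [hqx] at hq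
  have hb : Tendsto (fun k => bE (xk k) (vk k)) atTop (𝓝 (bE x v)) := by
    simp only [bE]
    exact (((tendsto_coord hxk 0).mul (tendsto_coord hv 2)).add
      ((tendsto_coord hxk 1).mul (tendsto_coord hv 1))).add
      ((tendsto_coord hxk 2).mul (tendsto_coord hv 0))
  have hnx : Tendsto (fun k => ‖xk k‖) atTop (𝓝 ‖x‖) := hxk.norm
  set β := bE x v with hβ
  -- the dominating sequence
  set M : ℕ → ℝ := fun k =>
    2 * ‖xk k‖ / bE (xk k) (vk k) * (t k)⁻¹ + |qE (xk k)| / bE (xk k) (vk k) with hMdef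
  have hM : Tendsto M atTop (𝓝 0) := by
    have h1 : Tendsto (fun k => 2 * ‖xk k‖ / bE (xk k) (vk k) * (t k)⁻¹) atTop
        (𝓝 (2 * ‖x‖ / β * 0)) :=
      ((hnx.const_mul 2).div hb hbxv.ne').mul (tendsto_inv_atTop_zero.comp ht)
    have h2 : Tendsto (fun k => |qE (xk k)| / bE (xk k) (vk k)) atTop (𝓝 (|(0:ℝ)| / β)) :=
      (hq.abs).div hb hbxv.ne'
    have := h1.add h2
    simpa using this
  -- eventual hypotheses
  have hE1 : ∀ᶠ k in atTop, 1 ≤ t k := ht.eventually_ge_atTop 1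
  have hE2 : ∀ᶠ k in atTop, β / 2 < bE (xk k) (vk k) :=
    hb.eventually (eventually_gt_nhds (by linarith))
  have hE3 : ∀ᶠ k in atTop, |t k * qE (vk k)| * |qE (xk k)| < β / 2 := by
    have hlim : Tendsto (fun k => |t k * qE (vk k)| * |qE (xk k)|) atTop (𝓝 (|a| * |(0:ℝ)|)) :=
      hta.abs.mul hq.abs
    have : Tendsto (fun k => |t k * qE (vk k)| * |qE (xk k)|) atTop (𝓝 0) := by simpa using hlim
    exact this.eventually (eventually_lt_nhds (by linarith))
  have hP : ∀ᶠ k in atTop, 1 ≤ t k ∧ β / 2 < bE (xk k) (vk k) ∧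
      |t k * qE (vk k)| * |qE (xk k)| < β / 2 := hE1.and (hE2.and hE3)
  -- key pointwise estimates
  have key : ∀ k, (1 ≤ t k ∧ β / 2 < bE (xk k) (vk k) ∧
      |t k * qE (vk k)| * |qE (xk k)| < β / 2) →
      ∀ u ∈ Set.Icc (0:ℝ) 1,
        0 < Dk (t k) (xk k) (vk k) u ∧ ‖Xk (t k) (xk k) (vk k) u‖ ≤ M k := by
    rintro k ⟨ht1, hb2, hAQ⟩ u ⟨hu0, hu1⟩
    have hB : 0 < bE (xk k) (vk k) := lt_trans (by linarith) hb2
    have htpos : (0:ℝ) < t k := by linarith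
    have hAQB : |t k * qE (vk k)| * |qE (xk k)| ≤ bE (xk k) (vk k) := by linarith
    have hDge : 1 + t k * u * bE (xk k) (vk k) / 2 ≤ Dk (t k) (xk k) (vk k) u :=
      Dk_lower (t k) (bE (xk k) (vk k)) (t k * qE (vk k)) (qE (xk k)) u (qE (vk k))
        ht1 hB hAQB rfl hu0 hu1
    have hDpos : 0 < Dk (t k) (xk k) (vk k) u := by
      have h4 : 0 ≤ t k * u * bE (xk k) (vk k) := by positivity
      linarith
    refine ⟨hDpos, ?_⟩
    have hnum : ‖u • xk k + (t k * u ^ 2 * qE (xk k) / 2) • vk k‖ ≤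
        u * ‖xk k‖ + t k * u ^ 2 * |qE (xk k)| / 2 := by
      calc ‖u • xk k + (t k * u ^ 2 * qE (xk k) / 2) • vk k‖
          ≤ ‖u • xk k‖ + ‖(t k * u ^ 2 * qE (xk k) / 2) • vk k‖ := norm_add_le _ _
        _ = |u| * ‖xk k‖ + |t k * u ^ 2 * qE (xk k) / 2| * ‖vk k‖ := by
            rw [norm_smul, norm_smul, Real.norm_eq_abs, Real.norm_eq_abs]
        _ = u * ‖xk k‖ + t k * u ^ 2 * |qE (xk k)| / 2 := by
            rw [hnorm k, mul_one, abs_of_nonneg hu0, abs_div, abs_mul, abs_mul,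
              abs_of_nonneg htpos.le, abs_of_nonneg (sq_nonneg u)]
            norm_num
    have hMD : u * ‖xk k‖ + t k * u ^ 2 * |qE (xk k)| / 2 ≤ M k * Dk (t k) (xk k) (vk k) u := by
      have hM0 : 0 ≤ M k := by
        have : 0 ≤ (t k)⁻¹ := inv_nonneg.mpr htpos.le
        have h6 : 0 ≤ 2 * ‖xk k‖ / bE (xk k) (vk k) * (t k)⁻¹ := by positivity
        have h7 : 0 ≤ |qE (xk k)| / bE (xk k) (vk k) := by positivity
        simp only [hMdef]
        linarith
      calc u * ‖xk k‖ + t k * u ^ 2 * |qE (xk k)| / 2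
          ≤ M k * (1 + t k * u * bE (xk k) (vk k) / 2) :=
            num_upper (t k) (bE (xk k) (vk k)) (qE (xk k)) u ‖xk k‖ ht1 hB (norm_nonneg _) hu0 hu1
        _ ≤ M k * Dk (t k) (xk k) (vk k) u := mul_le_mul_of_nonneg_left hDge hM0
    have hXnorm : ‖Xk (t k) (xk k) (vk k) u‖ =
        (Dk (t k) (xk k) (vk k) u)⁻¹ * ‖u • xk k + (t k * u ^ 2 * qE (xk k) / 2) • vk k‖ := by
      rw [Xk, norm_smul, Real.norm_eq_abs, abs_of_pos (inv_pos.mpr hDpos)]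
    rw [hXnorm, inv_mul_le_iff₀ hDpos]
    calc ‖u • xk k + (t k * u ^ 2 * qE (xk k) / 2) • vk k‖
        ≤ u * ‖xk k‖ + t k * u ^ 2 * |qE (xk k)| / 2 := hnum
      _ ≤ M k * Dk (t k) (xk k) (vk k) u := hMD
      _ = Dk (t k) (xk k) (vk k) u * M k := mul_comm _ _
  constructor
  · obtain ⟨K, hK⟩ := eventually_atTop.mp hP
    exact ⟨K, fun k hk u hu => (key k (hK k hk) u hu).1⟩
  · have hupper : ∀ᶠ k in atTop,
        (⨆ u : Set.Icc (0:ℝ) 1, ‖Xk (t k) (xk k) (vk k) (u : ℝ)‖) ≤ M k := by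
      filter_upwards [hP] with k hk
      exact ciSup_le fun u => (key k hk u u.2).2
    have hlower : ∀ᶠ k in atTop,
        (0:ℝ) ≤ ⨆ u : Set.Icc (0:ℝ) 1, ‖Xk (t k) (xk k) (vk k) (u : ℝ)‖ :=
      Eventually.of_forall fun k => Real.iSup_nonneg fun u => norm_nonneg _
    exact tendsto_of_tendsto_of_tendsto_of_le_of_le' tendsto_const_nhds hM hlower hupper
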